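/- Let I ⊆ ℝ be an interval, let J ⊆ I be a finite set, let g ∈ L²(I), and let u : I → ℝ be a function such that for all a, b ∈ I with a ≤ b and [a,b] ∩ J = ∅ one has u(b) − u(a) = ∫_a^b g(t) dt. Then for every ε > 0, (1/ε) ∫_{I ∩ (I − ε)} arctan((u(t+ε) − u(t))² / ε) dt ≤ ∫_I g(t)² dt + (π/2) · #J, where I − ε := {t − ε : t ∈ I} and #J is the cardinality of J. -/

import Mathlib

/-!
Split `I ∩ (I - ε)` according to whether `[t, t + ε]` meets the jump set `J`. If it does, then
`t` lies in `⋃ j ∈ J, [j - ε, j]`, a set of measure at most `ε · #J`, and the integrand is bounded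
by `π / 2`. If it does not, `u(t + ε) - u(t) = ∫_t^{t+ε} g`, so `arctan x ≤ x` and Cauchy–Schwarz
bound the integrand by `∫_t^{t+ε} g²`, whose integral over `t ∈ ℝ` is `ε ∫_I g²` by Fubini.
-/

open MeasureTheory Set
open scoped Convolution

lemma Real.arctan_le_self {x : ℝ} (hx : 0 ≤ x) : Real.arctan x ≤ x := by
  simpa using Real.le_tan (Real.arctan_nonneg.2 hx) (Real.arctan_lt_pi_div_two x)

lemma sq_integral_le_measureReal_mul_integral_sq {α : Type*} [MeasurableSpace α]
    {μ : Measure α} [IsFiniteMeasure μ] {f : α → ℝ} (hf : MemLp f 2 μ) :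
    (∫ x, f x ∂μ) ^ 2 ≤ μ.real univ * ∫ x, f x ^ 2 ∂μ := by
  rcases eq_zero_or_neZero μ with rfl | hμ
  · simp
  have jensen := (even_two.convexOn_pow (𝕜 := ℝ)).map_average_le
    (continuous_pow 2).continuousOn isClosed_univ
    (ae_of_all _ fun _ => mem_univ _) (hf.integrable one_le_two) hf.integrable_sq
  have hm : 0 < μ.real univ := by simp [measureReal_def, ENNReal.toReal_pos_iff, NeZero.ne μ]
  simp only [average_eq, smul_eq_mul, measureReal_def] at jensen hm ⊢
  rwa [mul_pow, inv_pow, sq (μ univ).toReal, mul_inv, mul_assoc,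
    mul_le_mul_iff_right₀ (inv_pos.2 hm), inv_mul_le_iff₀ hm] at jensen

lemma sq_intervalIntegral_le {g : ℝ → ℝ} {a b : ℝ} (hab : a ≤ b)
    (hg : MemLp g 2 (volume.restrict (Ioc a b))) :
    (∫ t in a..b, g t) ^ 2 ≤ (b - a) * ∫ t in Ioc a b, g t ^ 2 := by
  rw [intervalIntegral.integral_of_le hab, ← Real.volume_real_Ioc_of_le hab,
    ← measureReal_restrict_apply_univ]
  exact sq_integral_le_measureReal_mul_integral_sq hg

lemma setIntegral_le_integral_of_forall_le {α : Type*} [MeasurableSpace α] {μ : Measure α}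
    {f h : α → ℝ} {s : Set α} (hs : MeasurableSet s) (hh : Integrable h μ) (hh₀ : 0 ≤ h)
    (hf₀ : ∀ x ∈ s, 0 ≤ f x) (hfh : ∀ x ∈ s, f x ≤ h x) :
    ∫ x in s, f x ∂μ ≤ ∫ x, h x ∂μ :=
  (integral_mono_of_nonneg ((ae_restrict_iff' hs).2 (ae_of_all _ hf₀)) hh.restrict
    ((ae_restrict_iff' hs).2 (ae_of_all _ hfh))).trans
    (setIntegral_le_integral hh (ae_of_all _ hh₀))

section MovingIntegral

variable {E : Type*} [NormedAddCommGroup E] [NormedSpace ℝ E] {G : ℝ → E}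

lemma setIntegral_Ioc_eq_convolution (ε : ℝ) :
    (fun t => ∫ s in Ioc t (t + ε), G s) =
      G ⋆[(ContinuousLinearMap.lsmul ℝ ℝ).flip] (Ico (-ε) 0).indicator 1 := by
  funext t
  rw [convolution_def, ← integral_indicator measurableSet_Ioc]
  congr 1
  funext s
  have hmem : s ∈ Ioc t (t + ε) ↔ t - s ∈ Ico (-ε) 0 := by
    simp only [mem_Ioc, mem_Ico]
    constructor <;> rintro ⟨h₁, h₂⟩ <;> constructor <;> linarith
  by_cases hs : s ∈ Ioc t (t + ε)
  · simp [hs, hmem.1 hs]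
  · simp [hs, mt hmem.2 hs]

lemma integrable_indicator_Ico_one (a b : ℝ) : Integrable ((Ico a b).indicator (1 : ℝ → ℝ)) :=
  (integrable_indicator_iff measurableSet_Ico).2 (integrableOn_const measure_Ico_lt_top.ne)

lemma MeasureTheory.Integrable.integrable_setIntegral_Ioc (hG : Integrable G) (ε : ℝ) :
    Integrable (fun t => ∫ s in Ioc t (t + ε), G s) := by
  rw [setIntegral_Ioc_eq_convolution]
  exact hG.integrable_convolution _ (integrable_indicator_Ico_one _ _)

lemma integral_setIntegral_Ioc [CompleteSpace E] (hG : Integrable G) {ε : ℝ} (hε : 0 ≤ ε) :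
    ∫ t, ∫ s in Ioc t (t + ε), G s = ε • ∫ s, G s := by
  rw [setIntegral_Ioc_eq_convolution, integral_convolution _ hG (integrable_indicator_Ico_one _ _),
    integral_indicator_one measurableSet_Ico]
  simp [hε]

end MovingIntegral

lemma measureReal_biUnion_Icc_sub_le {J : Set ℝ} (hJ : J.Finite) {ε : ℝ} (hε : 0 ≤ ε) :
    volume.real (⋃ j ∈ J, Icc (j - ε) j) ≤ J.ncard * ε := by
  rw [← hJ.coe_toFinset, ncard_coe_finset]
  refine (measureReal_biUnion_finset_le _ _).trans ?_
  simp [hε]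

lemma integrable_indicator_biUnion_Icc_sub {J : Set ℝ} (hJ : J.Finite) (ε c : ℝ) :
    Integrable ((⋃ j ∈ J, Icc (j - ε) j).indicator fun _ => c) :=
  (integrable_indicator_iff (hJ.measurableSet_biUnion fun _ _ => measurableSet_Icc)).2
    (integrableOn_const (measure_biUnion_lt_top hJ fun _ _ => measure_Icc_lt_top).ne)

lemma integral_indicator_biUnion_Icc_add_setIntegral_Ioc_le {J : Set ℝ} (hJ : J.Finite)
    {G : ℝ → ℝ} (hG : Integrable G) {ε : ℝ} (hε : 0 ≤ ε) :
    ∫ t, ((⋃ j ∈ J, Icc (j - ε) j).indicator (fun _ => Real.pi / 2) t +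
        ∫ s in Ioc t (t + ε), G s) ≤ ε * ((∫ s, G s) + Real.pi / 2 * J.ncard) := by
  rw [integral_add (integrable_indicator_biUnion_Icc_sub hJ ε _) (hG.integrable_setIntegral_Ioc ε),
    integral_indicator (hJ.measurableSet_biUnion fun _ _ => measurableSet_Icc), setIntegral_const,
    integral_setIntegral_Ioc hG hε, smul_eq_mul, smul_eq_mul]
  have := mul_le_mul_of_nonneg_right (measureReal_biUnion_Icc_sub_le hJ hε)
    Real.pi_div_two_pos.le
  linarith

section JumpFunction

variable {I J : Set ℝ} {g u : ℝ → ℝ} {ε t : ℝ}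

lemma sq_sub_div_le_setIntegral_indicator (hI : I.OrdConnected)
    (hg : MemLp g 2 (volume.restrict I))
    (hfund : ∀ a ∈ I, ∀ b ∈ I, a ≤ b → Icc a b ∩ J = ∅ → u b - u a = ∫ t in a..b, g t)
    (hε : 0 < ε) (ht : t ∈ I) (htε : t + ε ∈ I) (hJ : Icc t (t + ε) ∩ J = ∅) :
    (u (t + ε) - u t) ^ 2 / ε ≤ ∫ s in Ioc t (t + ε), I.indicator (fun s => g s ^ 2) s := by
  have hIoc : Ioc t (t + ε) ⊆ I := fun s hs => hI.out ht htε (Ioc_subset_Icc_self hs)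
  rw [setIntegral_congr_fun measurableSet_Ioc fun s hs => indicator_of_mem (hIoc hs) _,
    div_le_iff₀' hε, hfund t ht (t + ε) htε (by linarith) hJ]
  simpa using sq_intervalIntegral_le (by linarith)
    (hg.mono_measure (Measure.restrict_mono hIoc le_rfl))

lemma arctan_sq_sub_div_le (hI : I.OrdConnected) (hg : MemLp g 2 (volume.restrict I))
    (hfund : ∀ a ∈ I, ∀ b ∈ I, a ≤ b → Icc a b ∩ J = ∅ → u b - u a = ∫ t in a..b, g t)
    (hε : 0 < ε) (ht : t ∈ I) (htε : t + ε ∈ I) :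
    Real.arctan ((u (t + ε) - u t) ^ 2 / ε) ≤
      (⋃ j ∈ J, Icc (j - ε) j).indicator (fun _ => Real.pi / 2) t +
        ∫ s in Ioc t (t + ε), I.indicator (fun s => g s ^ 2) s := by
  have hG₀ : 0 ≤ ∫ s in Ioc t (t + ε), I.indicator (fun s => g s ^ 2) s :=
    setIntegral_nonneg measurableSet_Ioc fun s _ => indicator_nonneg (fun s _ => sq_nonneg _) s
  by_cases htB : t ∈ ⋃ j ∈ J, Icc (j - ε) j
  · rw [indicator_of_mem htB]
    linarith [Real.arctan_lt_pi_div_two ((u (t + ε) - u t) ^ 2 / ε)]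
  · have hJ : Icc t (t + ε) ∩ J = ∅ :=
      eq_empty_iff_forall_notMem.2 fun j ⟨⟨hj₁, hj₂⟩, hjJ⟩ =>
        htB (mem_biUnion hjJ ⟨by linarith, hj₁⟩)
    rw [indicator_of_notMem htB, zero_add]
    exact (Real.arctan_le_self (by positivity)).trans
      (sq_sub_div_le_setIntegral_indicator hI hg hfund hε ht htε hJ)

end JumpFunction

theorem stmt8 (I : Set ℝ) (hI : I.OrdConnected) (J : Set ℝ) (hJfin : J.Finite)
    (g : ℝ → ℝ) (hg : MemLp g 2 (volume.restrict I)) (u : ℝ → ℝ)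
    (hfund : ∀ a ∈ I, ∀ b ∈ I, a ≤ b → Set.Icc a b ∩ J = ∅ →
      u b - u a = ∫ t in a..b, g t)
    (ε : ℝ) (hε : 0 < ε) :
    (1 / ε) * (∫ t in I ∩ ((fun s => s - ε) '' I),
        Real.arctan ((u (t + ε) - u t) ^ 2 / ε))
      ≤ (∫ t in I, (g t) ^ 2) + (Real.pi / 2) * J.ncard := by
  set B := ⋃ j ∈ J, Icc (j - ε) j
  set G := I.indicator fun s => g s ^ 2
  have hG : Integrable G := (integrable_indicator_iff hI.measurableSet).2 hg.integrable_sq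
  have hmajorant : Integrable fun t => B.indicator (fun _ => Real.pi / 2) t +
      ∫ s in Ioc t (t + ε), G s :=
    (integrable_indicator_biUnion_Icc_sub hJfin ε _).add (hG.integrable_setIntegral_Ioc ε)
  have hA : MeasurableSet (I ∩ (fun s => s - ε) '' I) :=
    hI.measurableSet.inter ((MeasurableEquiv.subRight ε).measurableSet_image.2 hI.measurableSet)
  have hG₀ : 0 ≤ G := indicator_nonneg fun s _ => sq_nonneg (g s)
  calc (1 / ε) * ∫ t in I ∩ (fun s => s - ε) '' I, Real.arctan ((u (t + ε) - u t) ^ 2 / ε)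
      ≤ (1 / ε) * ∫ t, (B.indicator (fun _ => Real.pi / 2) t + ∫ s in Ioc t (t + ε), G s) := by
        gcongr
        refine setIntegral_le_integral_of_forall_le hA hmajorant (fun t => add_nonneg
          (indicator_nonneg (fun _ _ => by positivity) t)
          (setIntegral_nonneg measurableSet_Ioc fun s _ => hG₀ s))
          (fun t _ => Real.arctan_nonneg.2 (by positivity)) ?_
        rintro t ⟨ht, s, hs, rfl⟩
        exact arctan_sq_sub_div_le hI hg hfund hε ht (by simpa using hs)
    _ ≤ (1 / ε) * (ε * ((∫ s, G s) + Real.pi / 2 * J.ncard)) := by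
        gcongr
        exact integral_indicator_biUnion_Icc_add_setIntegral_Ioc_le hJfin hG hε.le
    _ = (∫ t in I, (g t) ^ 2) + (Real.pi / 2) * J.ncard := by
        rw [show ∫ s, G s = ∫ t in I, g t ^ 2 from integral_indicator hI.measurableSet]
        field_simp
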